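/- Let X be a Polish space and let E be an analytic equivalence relation on X. Then for every uncountable Borel set B ⊆ X there exists an uncountable Borel set C ⊆ B such that E ∩ (C × C) (the graph of the restriction of E to C) is a Borel subset of X × X. (This is the statement that Σ¹₁ →_I Δ¹₁ holds for the σ-ideal of countable sets.) -/

import Mathlib

/-!
Pull `E` back along a continuous injection `f` of the Cantor space into `B`. The pullback `R` is
analytic, hence has the Baire property. If `R` is meagre, Mycielski's theorem gives an uncountable
compact `K` whose distinct points are not `R`-related, so `E` is equality on `f '' K`. Otherwise,
by Kuratowski–Ulam some vertical section of `R` is non-meagre; being analytic it contains an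
uncountable compact `K`, and then `f '' K` lies in a single `E`-class. Either way `E` is closed
on `f '' K`.
-/

open MeasureTheory Set Filter Topology PiNat

namespace PiNat

variable {α : Type*}

theorem cylinder_subset_of_mem {x y : ℕ → α} {m n : ℕ} (hy : y ∈ cylinder x m) (h : m ≤ n) :
    cylinder y n ⊆ cylinder x m :=
  mem_cylinder_iff_eq.1 hy ▸ cylinder_anti y h

theorem exists_forall_res {P : List α → Prop} (h0 : P []) (h : ∀ l, P l → ∃ a, P (a :: l)) :
    ∃ ω : ℕ → α, ∀ n, P (res ω n) := by
  choose next hnext using fun l : {l // P l} => h l.1 l.2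
  let path : ℕ → {l // P l} := fun n => Nat.rec ⟨[], h0⟩ (fun _ l => ⟨next l :: l.1, hnext l⟩) n
  have hres : ∀ n, res (fun i => next (path i)) n = (path n).1 := by
    intro n
    induction n with
    | zero => rfl
    | succ n ih => rw [res_succ, ih]
  exact ⟨fun i => next (path i), fun n => hres n ▸ (path n).2⟩

variable [TopologicalSpace α] [DiscreteTopology α]

theorem exists_cylinder_subset {x : ℕ → α} {U : Set (ℕ → α)} (hU : U ∈ 𝓝 x) :
    ∃ n, cylinder x n ⊆ U := by
  obtain ⟨_, ⟨y, n, rfl⟩, hx, hsub⟩ := (isTopologicalBasis_cylinders fun _ => α).mem_nhds_iff.1 hU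
  exact ⟨n, mem_cylinder_iff_eq.1 hx ▸ hsub⟩

instance [Nontrivial α] : PerfectSpace (ℕ → α) :=
  ⟨fun x _ => accPt_iff_nhds.2 fun U hU => by
    obtain ⟨n, hn⟩ := exists_cylinder_subset hU
    obtain ⟨a, ha⟩ := exists_ne (x n)
    exact ⟨Function.update x n a, ⟨hn (update_mem_cylinder x n a), trivial⟩,
      fun h => ha (by simpa using congrFun h n)⟩⟩

theorem eq_of_forall_mem_closure_image_cylinder {Y : Type*} [TopologicalSpace Y] [T2Space Y]
    {g : (ℕ → α) → Y} (hg : Continuous g) {ω : ℕ → α} {y : Y}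
    (h : ∀ n, y ∈ closure (g '' cylinder ω n)) : y = g ω := by
  have : ClusterPt y (map g (𝓝 ω)) := clusterPt_iff_forall_mem_closure.2 fun s hs => by
    obtain ⟨n, hn⟩ := exists_cylinder_subset (mem_map.1 hs)
    exact closure_mono (image_subset_iff.2 hn) (h n)
  exact t2_iff_nhds.1 ‹_› (this.mono (hg.tendsto ω))

end PiNat

-- Instance search misses this: looking for separability it cycles back to `PolishSpace Bool`.
instance : PolishSpace (ℕ → Bool) := by
  have : TopologicalSpace.SeparableSpace (ℕ → Bool) := inferInstance
  infer_instance

instance : Uncountable (ℕ → Bool) := by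
  rw [← Cardinal.aleph0_lt_mk_iff]
  simpa using Cardinal.cantor Cardinal.aleph0

theorem Function.Injective.not_countable_range {α β : Type*} [Uncountable α] {f : α → β}
    (hf : Function.Injective f) : ¬ (range f).Countable := fun h =>
  not_countable (countable_univ_iff.1
    (countable_of_injective_of_countable_image hf.injOn (by simpa using h)))

section Meagre

variable {X Y : Type*} [TopologicalSpace X] [TopologicalSpace Y]

theorem Filter.EventuallyEq.isMeagre_diff {s t : Set X} (h : s =ᶠ[residual X] t) :
    IsMeagre (s \ t) :=
  h.mono fun _ hx hst => hst.2 (Eq.mp hx hst.1)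

theorem IsClosed.baireMeasurableSet {s : Set X} (hs : IsClosed s) : BaireMeasurableSet s :=
  hs.isOpen_compl.baireMeasurableSet.of_compl

theorem Set.Countable.isMeagre [T1Space X] [PerfectSpace X] {s : Set X} (hs : s.Countable) :
    IsMeagre s := by
  rw [← biUnion_of_singleton s]
  refine isMeagre_biUnion hs fun x _ => IsNowhereDense.isMeagre ?_
  have := perfectSpace_iff_forall_not_isolated.1 ‹_› x
  exact isClosed_singleton.isNowhereDense_iff.2 (interior_singleton x)

theorem IsOpen.eventually_residual_dense_preimage_prodMk [SecondCountableTopology Y]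
    {O : Set (X × Y)} (hO : IsOpen O) (hd : Dense O) :
    ∀ᶠ x in residual X, Dense (Prod.mk x ⁻¹' O) := by
  obtain ⟨b, hbc, -, hb⟩ := TopologicalSpace.exists_countable_basis Y
  have hV : ∀ V ∈ b, ∀ᶠ x in residual X, V.Nonempty → (V ∩ Prod.mk x ⁻¹' O).Nonempty := by
    intro V hV
    rcases V.eq_empty_or_nonempty with rfl | hVne
    · exact Eventually.of_forall fun _ h => absurd h not_nonempty_empty
    have hproj : IsOpen (Prod.fst '' (O ∩ univ ×ˢ V)) :=
      isOpenMap_fst _ (hO.inter (isOpen_univ.prod (hb.isOpen hV)))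
    have hdense : Dense (Prod.fst '' (O ∩ univ ×ˢ V)) := by
      refine dense_iff_inter_open.2 fun U hU hUne => ?_
      obtain ⟨p, ⟨hpU, hpV⟩, hpO⟩ :=
        hd.inter_open_nonempty _ (hU.prod (hb.isOpen hV)) (hUne.prod hVne)
      exact ⟨p.1, hpU, p, ⟨hpO, trivial, hpV⟩, rfl⟩
    filter_upwards [residual_of_dense_open hproj hdense]
    rintro _ ⟨p, ⟨hpO, -, hpV⟩, rfl⟩ -
    exact ⟨p.2, hpV, hpO⟩
  filter_upwards [(eventually_countable_ball hbc).2 hV] with x hx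
  exact hb.dense_iff.2 hx

theorem IsMeagre.eventually_residual_isMeagre_preimage_prodMk [SecondCountableTopology Y]
    {s : Set (X × Y)} (hs : IsMeagre s) : ∀ᶠ x in residual X, IsMeagre (Prod.mk x ⁻¹' s) := by
  obtain ⟨S, hSo, hSd, hSc, hS⟩ := mem_residual_iff.1 hs
  filter_upwards [(eventually_countable_ball hSc).2 fun O hO =>
    (hSo O hO).eventually_residual_dense_preimage_prodMk (hSd O hO)] with x hx
  rw [IsMeagre, ← preimage_compl]
  refine mem_of_superset ((countable_bInter_mem hSc).2 fun O hO =>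
    residual_of_dense_open ((hSo O hO).preimage (Continuous.prodMk_right x)) (hx O hO)) ?_
  rw [← preimage_iInter₂, ← sInter_eq_biInter]
  exact preimage_mono hS

theorem BaireMeasurableSet.exists_not_isMeagre_preimage_prodMk [BaireSpace X] [BaireSpace Y]
    [SecondCountableTopology Y] {s : Set (X × Y)} (hs : BaireMeasurableSet s)
    (hns : ¬ IsMeagre s) : ∃ x, ¬ IsMeagre (Prod.mk x ⁻¹' s) := by
  obtain ⟨u, hu, hsu⟩ := hs.residualEq_isOpen
  obtain ⟨p, hp⟩ : u.Nonempty := nonempty_iff_ne_empty.2 fun h =>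
    hns (by simpa [h] using hsu.isMeagre_diff)
  obtain ⟨x, ⟨q, hq, rfl⟩, hx⟩ := (dense_of_mem_residual
    hsu.symm.isMeagre_diff.eventually_residual_isMeagre_preimage_prodMk).inter_open_nonempty
    _ (isOpenMap_fst u hu) ⟨p.1, p, hp, rfl⟩
  refine ⟨q.1, fun hm => not_isMeagre_of_isOpen (hu.preimage (Continuous.prodMk_right q.1))
    ⟨q.2, hq⟩ ((hm.union hx).mono fun y hy => ?_)⟩
  by_cases hys : (q.1, y) ∈ s
  exacts [Or.inl hys, Or.inr ⟨hy, hys⟩]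

end Meagre

section BaireProperty

variable {X : Type*} [TopologicalSpace X]

def nonMeagreLocus (s : Set X) : Set X := {x | ∀ u ∈ 𝓝 x, ¬ IsMeagre (u ∩ s)}

theorem isClosed_nonMeagreLocus (s : Set X) : IsClosed (nonMeagreLocus s) := by
  refine isOpen_compl_iff.1 (isOpen_iff_mem_nhds.2 fun x hx => ?_)
  simp only [nonMeagreLocus, mem_compl_iff, mem_ofPred_eq, not_forall, not_not] at hx
  obtain ⟨u, hu, hm⟩ := hx
  filter_upwards [eventually_mem_nhds_iff.2 hu] with y hy hy'
  exact hy' u hy hm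

theorem nonMeagreLocus_subset_closure (s : Set X) : nonMeagreLocus s ⊆ closure s :=
  fun _ hx => mem_closure_iff_nhds.2 fun u hu => nonempty_of_not_isMeagre (hx u hu)

theorem isMeagre_diff_nonMeagreLocus [SecondCountableTopology X] (s : Set X) :
    IsMeagre (s \ nonMeagreLocus s) := by
  obtain ⟨b, hbc, -, hb⟩ := TopologicalSpace.exists_countable_basis X
  refine (isMeagre_biUnion (hbc.mono (sep_subset b fun V => IsMeagre (V ∩ s)))
    fun V hV => hV.2).mono ?_
  rintro x ⟨hxs, hx⟩
  simp only [nonMeagreLocus, mem_ofPred_eq, not_forall, not_not] at hx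
  obtain ⟨u, hu, hm⟩ := hx
  obtain ⟨V, hVb, hxV, hVu⟩ := hb.mem_nhds_iff.1 hu
  exact mem_iUnion₂.2 ⟨V, ⟨hVb, hm.mono (inter_subset_inter_left s hVu)⟩, hxV, hxs⟩

/-- The difference is Borel, so it is open modulo a meagre set. That open set cannot meet it:
near a point of both, `s` would not be meagre while every `t i` is. -/
theorem isMeagre_nonMeagreLocus_diff_iUnion [SecondCountableTopology X] {ι : Type*} [Countable ι]
    {s : Set X} {t : ι → Set X} (hst : s ⊆ ⋃ i, t i) :
    IsMeagre (nonMeagreLocus s \ ⋃ i, nonMeagreLocus (t i)) := by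
  set T := nonMeagreLocus s \ ⋃ i, nonMeagreLocus (t i)
  obtain ⟨u, hu, hTu⟩ := ((isClosed_nonMeagreLocus s).baireMeasurableSet.diff
    (.iUnion fun i => (isClosed_nonMeagreLocus (t i)).baireMeasurableSet)).residualEq_isOpen
  suffices ∀ x ∈ u, x ∉ T from
    hTu.isMeagre_diff.mono fun x hx => (⟨hx, fun hxu => this x hxu hx⟩ : x ∈ T \ u)
  intro x hxu hxT
  refine hxT.1 u (hu.mem_nhds hxu) ?_
  refine (isMeagre_iUnion fun i =>
    hTu.symm.isMeagre_diff.union (isMeagre_diff_nonMeagreLocus (t i))).mono ?_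
  rintro y ⟨hyu, hys⟩
  obtain ⟨i, hyi⟩ := mem_iUnion.1 (hst hys)
  refine mem_iUnion.2 ⟨i, ?_⟩
  by_cases hy : y ∈ nonMeagreLocus (t i)
  · exact Or.inl ⟨hyu, fun hyT => hyT.2 (mem_iUnion.2 ⟨i, hy⟩)⟩
  · exact Or.inr ⟨hyi, hy⟩

/-- Lusin–Sierpiński. Off a meagre set, a point of the non-meagre locus of a piece
`g '' cylinder` of the Lusin scheme of `A = range g` lies in the locus of one of its children,
and the branch so obtained leads to a preimage of the point. -/
theorem MeasureTheory.AnalyticSet.baireMeasurableSet [T2Space X] [SecondCountableTopology X]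
    {A : Set X} (hA : AnalyticSet A) : BaireMeasurableSet A := by
  rw [AnalyticSet] at hA
  rcases hA with rfl | ⟨g, hg, rfl⟩
  · exact isOpen_empty.baireMeasurableSet
  let H : List ℕ → Set X := fun l => nonMeagreLocus (g '' {ω | res ω l.length = l})
  have hbad : IsMeagre (⋃ l, H l \ ⋃ k, H (k :: l)) := by
    refine isMeagre_iUnion fun l => isMeagre_nonMeagreLocus_diff_iUnion ?_
    rintro _ ⟨ω, hω, rfl⟩
    exact mem_iUnion.2 ⟨ω l.length, ω, by simpa using hω, rfl⟩
  have hpath : H [] \ ⋃ l, (H l \ ⋃ k, H (k :: l)) ⊆ range g := by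
    rintro x ⟨hx0, hx⟩
    obtain ⟨ω, hω⟩ := exists_forall_res (P := fun l => x ∈ H l) hx0 fun l hl => by
      by_contra! h
      exact hx (mem_iUnion.2 ⟨l, hl, by simpa using h⟩)
    refine ⟨ω, (eq_of_forall_mem_closure_image_cylinder hg fun n => ?_).symm⟩
    simpa [H, cylinder_eq_res] using nonMeagreLocus_subset_closure _ (hω n)
  have hH : H [] = nonMeagreLocus (range g) := by simp [H]
  rw [← inter_union_sdiff (range g) (H []), inter_comm, ← sdiff_sdiff_right_self]
  exact ((isClosed_nonMeagreLocus _).baireMeasurableSet.diff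
    (hbad.mono (sdiff_subset_comm.1 hpath)).baireMeasurableSet).union
    (hH ▸ isMeagre_diff_nonMeagreLocus (range g)).baireMeasurableSet

end BaireProperty

section PerfectSubsets

variable {X : Type*} [TopologicalSpace X] [PolishSpace X]

theorem MeasurableSet.exists_nat_bool_injection_of_not_countable [MeasurableSpace X] [BorelSpace X]
    {B : Set X} (hB : MeasurableSet B) (hBc : ¬ B.Countable) :
    ∃ f : (ℕ → Bool) → X, range f ⊆ B ∧ Continuous f ∧ Function.Injective f := by
  obtain ⟨t, ht, htp, hBt, -⟩ := hB.isClopenable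
  obtain ⟨f, hfB, hf, hfi⟩ := @IsClosed.exists_nat_bool_injection_of_not_countable X t htp B hBt hBc
  exact ⟨f, hfB, continuous_le_rng ht hf, hfi⟩

theorem BaireMeasurableSet.exists_isCompact_not_countable_subset [PerfectSpace X] {s : Set X}
    (hs : BaireMeasurableSet s) (hns : ¬ IsMeagre s) :
    ∃ K ⊆ s, IsCompact K ∧ ¬ K.Countable := by
  borelize X
  obtain ⟨u, hu, hsu⟩ := hs.residualEq_isOpen
  obtain ⟨G, hGsu, hG, hGd⟩ := mem_residual.1 hsu.symm.isMeagre_diff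
  have hGs : u ∩ G ⊆ s := fun y hy => by_contra fun hys => hGsu hy.2 ⟨hy.1, hys⟩
  have hGm : IsMeagre Gᶜ := by
    rw [IsMeagre, compl_compl]
    exact residual_of_dense_Gδ hG hGd
  have hGc : ¬ (u ∩ G).Countable := fun hc =>
    hns (((hc.isMeagre.union hsu.isMeagre_diff).union hGm).mono fun y hy => by
      by_cases hyu : y ∈ u
      · by_cases hyG : y ∈ G
        exacts [Or.inl (Or.inl ⟨hyu, hyG⟩), Or.inr hyG]
      · exact Or.inl (Or.inr ⟨hy, hyu⟩))
  obtain ⟨f, hfG, hf, hfi⟩ :=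
    (hu.measurableSet.inter hG.measurableSet).exists_nat_bool_injection_of_not_countable hGc
  exact ⟨range f, hfG.trans hGs, isCompact_range hf, hfi.not_countable_range⟩

end PerfectSubsets

section Mycielski

theorem exists_cylinder_prod_subset {α : Type*} [TopologicalSpace α] [DiscreteTopology α]
    {W : Set ((ℕ → α) × (ℕ → α))} (hW : IsOpen W) (hd : Dense W) (x y : ℕ → α) (n : ℕ) :
    ∃ x' ∈ cylinder x n, ∃ y' ∈ cylinder y n, ∃ m ≥ n, cylinder x' m ×ˢ cylinder y' m ⊆ W := by
  obtain ⟨⟨x', y'⟩, ⟨hx', hy'⟩, hW'⟩ := hd.inter_open_nonempty _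
    ((isOpen_cylinder _ x n).prod (isOpen_cylinder _ y n))
    ⟨(x, y), self_mem_cylinder x n, self_mem_cylinder y n⟩
  obtain ⟨u, hu, v, hv, huv⟩ := mem_nhds_prod_iff.1 (hW.mem_nhds hW')
  obtain ⟨k, hk⟩ := exists_cylinder_subset hu
  obtain ⟨l, hl⟩ := exists_cylinder_subset hv
  refine ⟨x', hx', y', hy', max n (max k l), le_max_left _ _, (Set.prod_mono ?_ ?_).trans huv⟩
  · exact (cylinder_anti x' (by omega)).trans hk
  · exact (cylinder_anti y' (by omega)).trans hl

theorem exists_forall_cylinder_prod_subset {α ι : Type*} [TopologicalSpace α] [DiscreteTopology α]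
    [Finite ι] {W : Set ((ℕ → α) × (ℕ → α))} (hW : IsOpen W) (hd : Dense W) (c : ι → ℕ → α)
    (n : ℕ) : ∃ c' : ι → ℕ → α, ∃ m ≥ n, (∀ i, c' i ∈ cylinder (c i) n) ∧
      ∀ i j, i ≠ j → cylinder (c' i) m ×ˢ cylinder (c' j) m ⊆ W := by
  classical
  have := Fintype.ofFinite ι
  suffices ∀ P : Finset (ι × ι), ∃ c' : ι → ℕ → α, ∃ m ≥ n, (∀ i, c' i ∈ cylinder (c i) n) ∧
      ∀ p ∈ P, p.1 ≠ p.2 → cylinder (c' p.1) m ×ˢ cylinder (c' p.2) m ⊆ W by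
    obtain ⟨c', m, hm, hc', hW'⟩ := this Finset.univ
    exact ⟨c', m, hm, hc', fun i j hij => hW' (i, j) (Finset.mem_univ _) hij⟩
  intro P
  induction P using Finset.induction_on with
  | empty => exact ⟨c, n, le_rfl, fun i => self_mem_cylinder _ _, by simp⟩
  | insert p P _ ih =>
    obtain ⟨c', m, hm, hc', hP⟩ := ih
    obtain ⟨i, j⟩ := p
    by_cases hij : i = j
    · refine ⟨c', m, hm, hc', fun p hp hne => ?_⟩
      rcases Finset.mem_insert.1 hp with rfl | hp
      exacts [absurd hij hne, hP p hp hne]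
    obtain ⟨a, ha, b, hb, m', hm', hab⟩ := exists_cylinder_prod_subset hW hd (c' i) (c' j) m
    set c'' := Function.update (Function.update c' i a) j b
    have hc'' : ∀ k, c'' k ∈ cylinder (c' k) m := by
      intro k
      simp only [c'', Function.update_apply]
      split_ifs with hkj hki
      exacts [hkj ▸ hb, hki ▸ ha, self_mem_cylinder _ _]
    have hsub : ∀ k, cylinder (c'' k) m' ⊆ cylinder (c' k) m :=
      fun k => cylinder_subset_of_mem (hc'' k) hm'
    refine ⟨c'', m', hm.trans hm',
      fun k => cylinder_subset_of_mem (hc' k) hm (hc'' k), fun p hp hne => ?_⟩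
    rcases Finset.mem_insert.1 hp with rfl | hp
    · simpa [c'', Function.update_of_ne hij] using hab
    · exact (Set.prod_mono (hsub _) (hsub _)).trans (hP p hp hne)

/-- A level of a binary Cantor scheme of cylinders is a length `n` and a centre `c σ` for each
node `σ : Fin k → Bool`, the node standing for `cylinder (c σ) n`. -/
def IsSplitRefinement {k : ℕ} (n : ℕ) (c : (Fin k → Bool) → ℕ → Bool) (m : ℕ)
    (c' : (Fin (k + 1) → Bool) → ℕ → Bool) : Prop :=
  n < m ∧ ∀ σ, c' σ ∈ cylinder (c (Fin.init σ)) n ∧ c' σ n = σ (Fin.last k)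

theorem exists_isSplitRefinement {W : Set ((ℕ → Bool) × (ℕ → Bool))} (hW : IsOpen W)
    (hd : Dense W) {k : ℕ} (n : ℕ) (c : (Fin k → Bool) → ℕ → Bool) :
    ∃ m c', IsSplitRefinement n c m c' ∧
      ∀ σ τ, σ ≠ τ → cylinder (c' σ) m ×ˢ cylinder (c' τ) m ⊆ W := by
  obtain ⟨c', m, hm, hc', hW'⟩ := exists_forall_cylinder_prod_subset hW hd
    (fun σ : Fin (k + 1) → Bool => Function.update (c (Fin.init σ)) n (σ (Fin.last k))) (n + 1)
  refine ⟨m, c', ⟨by omega, fun σ => ⟨?_, ?_⟩⟩, hW'⟩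
  · exact cylinder_subset_of_mem (update_mem_cylinder _ _ _) n.le_succ (hc' σ)
  · simpa using hc' σ n n.lt_succ_self

theorem exists_cantorScheme {O : ℕ → Set ((ℕ → Bool) × (ℕ → Bool))} (hO : ∀ j, IsOpen (O j))
    (hd : ∀ j, Dense (O j)) :
    ∃ (n : ℕ → ℕ) (c : ∀ k, (Fin k → Bool) → ℕ → Bool),
      (∀ k, IsSplitRefinement (n k) (c k) (n (k + 1)) (c (k + 1))) ∧
      ∀ k σ τ, σ ≠ τ → ∀ j < k, cylinder (c k σ) (n k) ×ˢ cylinder (c k τ) (n k) ⊆ O j := by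
  choose m c' hc' hW using fun k (p : ℕ × ((Fin k → Bool) → ℕ → Bool)) =>
    exists_isSplitRefinement (isOpen_iInter_of_finite fun j : Fin (k + 1) => hO j)
      (dense_iInter_of_isOpen (fun j : Fin (k + 1) => hO j) fun j => hd j) p.1 p.2
  let level : ∀ k, ℕ × ((Fin k → Bool) → ℕ → Bool) :=
    fun k => Nat.rec (0, fun _ _ => false) (fun k p => (m k p, c' k p)) k
  refine ⟨fun k => (level k).1, fun k => (level k).2, fun k => hc' k (level k), ?_⟩
  rintro (_ | k) σ τ hστ j hj
  · exact absurd hj (Nat.not_lt_zero j)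
  · exact (hW k (level k) σ τ hστ).trans (iInter_subset_of_subset ⟨j, hj⟩ subset_rfl)

/-- The point at the end of the branch `b`; its `i`-th coordinate is fixed from level `i + 1` on. -/
def cantorSchemeLimit (c : ∀ k, (Fin k → Bool) → ℕ → Bool) (b : ℕ → Bool) : ℕ → Bool :=
  fun i => c (i + 1) (fun j => b j) i

theorem continuous_cantorSchemeLimit (c : ∀ k, (Fin k → Bool) → ℕ → Bool) :
    Continuous (cantorSchemeLimit c) :=
  continuous_pi fun i => (continuous_of_discreteTopology (f := fun σ => c (i + 1) σ i)).comp
    (continuous_pi fun j => continuous_apply (j : ℕ))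

section Limit

variable {n : ℕ → ℕ} {c : ∀ k, (Fin k → Bool) → ℕ → Bool}

theorem strictMono_of_isSplitRefinement
    (hc : ∀ k, IsSplitRefinement (n k) (c k) (n (k + 1)) (c (k + 1))) : StrictMono n :=
  strictMono_nat_of_lt_succ fun k => (hc k).1

theorem mem_cylinder_of_isSplitRefinement
    (hc : ∀ k, IsSplitRefinement (n k) (c k) (n (k + 1)) (c (k + 1))) (b : ℕ → Bool) {k l : ℕ}
    (hkl : k ≤ l) : c l (fun j => b j) ∈ cylinder (c k fun j => b j) (n k) := by
  induction l, hkl using Nat.le_induction with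
  | base => exact self_mem_cylinder _ _
  | succ l hkl ih =>
    exact cylinder_subset_of_mem ih ((strictMono_of_isSplitRefinement hc).monotone hkl)
      ((hc l).2 _).1

theorem cantorSchemeLimit_mem_cylinder
    (hc : ∀ k, IsSplitRefinement (n k) (c k) (n (k + 1)) (c (k + 1))) (b : ℕ → Bool) (k : ℕ) :
    cantorSchemeLimit c b ∈ cylinder (c k fun j => b j) (n k) := by
  intro i hi
  have hn : i < n (i + 1) := (strictMono_of_isSplitRefinement hc).id_le (i + 1)
  rcases le_total (i + 1) k with h | h
  · exact (mem_cylinder_of_isSplitRefinement hc b h i hn).symm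
  · exact mem_cylinder_of_isSplitRefinement hc b h i hi

theorem cantorSchemeLimit_apply
    (hc : ∀ k, IsSplitRefinement (n k) (c k) (n (k + 1)) (c (k + 1))) (b : ℕ → Bool) (k : ℕ) :
    cantorSchemeLimit c b (n k) = b k := by
  rw [cantorSchemeLimit_mem_cylinder hc b (k + 1) (n k) (hc k).1, ((hc k).2 _).2]
  rfl

theorem cantorSchemeLimit_injective
    (hc : ∀ k, IsSplitRefinement (n k) (c k) (n (k + 1)) (c (k + 1))) :
    Function.Injective (cantorSchemeLimit c) :=
  fun b b' h => funext fun k => by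
    rw [← cantorSchemeLimit_apply hc b, ← cantorSchemeLimit_apply hc b', h]

end Limit

theorem exists_isCompact_not_countable_offDiag_subset_iInter
    {O : ℕ → Set ((ℕ → Bool) × (ℕ → Bool))} (hO : ∀ j, IsOpen (O j)) (hd : ∀ j, Dense (O j)) :
    ∃ K : Set (ℕ → Bool), IsCompact K ∧ ¬ K.Countable ∧ K.offDiag ⊆ ⋂ j, O j := by
  obtain ⟨n, c, hc, hcO⟩ := exists_cantorScheme hO hd
  refine ⟨range (cantorSchemeLimit c), isCompact_range (continuous_cantorSchemeLimit c),
    (cantorSchemeLimit_injective hc).not_countable_range, ?_⟩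
  rintro ⟨_, _⟩ ⟨⟨b, rfl⟩, ⟨b', rfl⟩, hbb'⟩
  refine mem_iInter.2 fun j => ?_
  obtain ⟨i, hi⟩ := Function.ne_iff.1 fun h => hbb' (congrArg (cantorSchemeLimit c) h)
  have hne : (fun l : Fin (max i j + 1) => b l) ≠ fun l : Fin (max i j + 1) => b' l :=
    fun h => hi (congrFun h ⟨i, by omega⟩)
  exact hcO _ _ _ hne j (by omega)
    ⟨cantorSchemeLimit_mem_cylinder hc b _, cantorSchemeLimit_mem_cylinder hc b' _⟩

/-- Mycielski's theorem for the Cantor space. -/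
theorem IsMeagre.exists_isCompact_not_countable_disjoint_offDiag
    {M : Set ((ℕ → Bool) × (ℕ → Bool))} (hM : IsMeagre M) :
    ∃ K : Set (ℕ → Bool), IsCompact K ∧ ¬ K.Countable ∧ Disjoint K.offDiag M := by
  obtain ⟨G, hGM, hG, hGd⟩ := mem_residual.1 hM
  obtain ⟨O, hO, rfl⟩ := hG.eq_iInter_nat
  obtain ⟨K, hK, hKc, hKO⟩ := exists_isCompact_not_countable_offDiag_subset_iInter hO
    fun j => hGd.mono (iInter_subset _ j)
  exact ⟨K, hK, hKc, disjoint_compl_left.mono_left (hKO.trans hGM)⟩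

end Mycielski

theorem MeasureTheory.AnalyticSet.exists_isCompact_not_countable_subset_preimage_prodMk
    {X Y : Type*} [TopologicalSpace X] [TopologicalSpace Y] [PolishSpace X] [PolishSpace Y]
    [PerfectSpace Y] {R : Set (X × Y)} (hR : AnalyticSet R) (hRm : ¬ IsMeagre R) :
    ∃ x, ∃ K ⊆ Prod.mk x ⁻¹' R, IsCompact K ∧ ¬ K.Countable := by
  obtain ⟨x, hx⟩ := hR.baireMeasurableSet.exists_not_isMeagre_preimage_prodMk hRm
  have hRx : AnalyticSet (Prod.mk x ⁻¹' R) := hR.preimage (Continuous.prodMk_right x)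
  exact ⟨x, hRx.baireMeasurableSet.exists_isCompact_not_countable_subset hx⟩

theorem MeasureTheory.AnalyticSet.exists_isCompact_not_countable_disjoint_offDiag_or_subset
    {R : Set ((ℕ → Bool) × (ℕ → Bool))} (hR : AnalyticSet R) :
    ∃ K : Set (ℕ → Bool), IsCompact K ∧ ¬ K.Countable ∧
      (Disjoint K.offDiag R ∨ ∃ x, K ⊆ Prod.mk x ⁻¹' R) := by
  by_cases hRm : IsMeagre R
  · obtain ⟨K, hK, hKc, hKR⟩ := hRm.exists_isCompact_not_countable_disjoint_offDiag
    exact ⟨K, hK, hKc, Or.inl hKR⟩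
  · obtain ⟨x, K, hKR, hK, hKc⟩ := hR.exists_isCompact_not_countable_subset_preimage_prodMk hRm
    exact ⟨K, hK, hKc, Or.inr ⟨x, hKR⟩⟩

/-- `Σ¹₁ →_I Δ¹₁` for the σ-ideal of countable sets: for every analytic
equivalence relation `E` on a Polish space and every uncountable Borel set `B`,
there is an uncountable Borel `C ⊆ B` on which `E` is Borel. -/
theorem analytic_equivalence_borel_on_uncountable_borel_subset
    {X : Type*} [TopologicalSpace X] [PolishSpace X]
    [MeasurableSpace X] [BorelSpace X]
    (E : X → X → Prop) (hE : Equivalence E)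
    (hEan : AnalyticSet {p : X × X | E p.1 p.2}) :
    ∀ B : Set X, MeasurableSet B → ¬ B.Countable →
      ∃ C : Set X, C ⊆ B ∧ MeasurableSet C ∧ ¬ C.Countable ∧
        MeasurableSet ({p : X × X | E p.1 p.2} ∩ C ×ˢ C) := by
  intro B hB hBc
  obtain ⟨f, hfB, hf, hfi⟩ := hB.exists_nat_bool_injection_of_not_countable hBc
  obtain ⟨K, hK, hKc, hKE⟩ :=
    (hEan.preimage (hf.prodMap hf)).exists_isCompact_not_countable_disjoint_offDiag_or_subset
  have hC : IsClosed (f '' K) := (hK.image hf).isClosed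
  refine ⟨f '' K, (image_subset_range f K).trans hfB, hC.measurableSet,
    fun h => hKc (countable_of_injective_of_countable_image hfi.injOn h), ?_⟩
  rcases hKE with hKE | ⟨x, hx⟩
  · have hEK : {p : X × X | E p.1 p.2} ∩ (f '' K) ×ˢ (f '' K) =
        diagonal X ∩ (f '' K) ×ˢ (f '' K) := by
      ext ⟨_, _⟩
      simp only [mem_inter_iff, mem_ofPred_eq, mem_diagonal_iff, mem_prod, and_congr_left_iff]
      rintro ⟨⟨u, hu, rfl⟩, ⟨w, hw, rfl⟩⟩
      exact ⟨fun h => by_contra fun hne =>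
        disjoint_left.1 hKE
          (show (u, w) ∈ K.offDiag from ⟨hu, hw, fun huw => hne (congrArg f huw)⟩) h,
        fun h => h ▸ hE.refl _⟩
    rw [hEK]
    exact isClosed_diagonal.measurableSet.inter (hC.prod hC).measurableSet
  · rw [inter_eq_right.2]
    · exact (hC.prod hC).measurableSet
    rintro ⟨_, _⟩ ⟨⟨u, hu, rfl⟩, ⟨w, hw, rfl⟩⟩
    exact hE.trans (hE.symm (hx hu)) (hx hw)
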